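/- Confluence of lazy equivalence with extended reduction: if T₁ reduces to T₂ in one extended parallel step in L₁, and L₁ and L₂ are lazily equivalent at level 0 with respect to T₁, then L₁ and L₂ are lazily equivalent at level 0 with respect to T₂. -/

import Mathlib

inductive Bk | abbr | abst
deriving DecidableEq

inductive Fk | appl | cast
deriving DecidableEq

inductive Tm
| sort : Nat → Tm
| lref : Nat → Tm
| bind : Bk → Tm → Tm → Tm
| flat : Fk → Tm → Tm → Tm
deriving DecidableEq

inductive Lift : Nat → Nat → Tm → Tm → Prop
| sort (l m k) : Lift l m (.sort k) (.sort k)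
| lt {l m i} : i < l → Lift l m (.lref i) (.lref i)
| ge {l m i} : l ≤ i → Lift l m (.lref i) (.lref (i + m))
| bind {l m b W₁ W₂ T₁ T₂} : Lift l m W₁ W₂ → Lift (l + 1) m T₁ T₂ →
    Lift l m (.bind b W₁ T₁) (.bind b W₂ T₂)
| flat {l m f V₁ V₂ T₁ T₂} : Lift l m V₁ V₂ → Lift l m T₁ T₂ →
    Lift l m (.flat f V₁ T₁) (.flat f V₂ T₂)

inductive Env
| null : Env
| pair : Env → Bk → Tm → Env
deriving DecidableEq

inductive Drop : Nat → Nat → Env → Env → Prop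
| atom (l) : Drop l 0 .null .null
| pair {L₁ L₂ b W} : Drop 0 0 L₁ L₂ → Drop 0 0 (.pair L₁ b W) (.pair L₂ b W)
| drop {m L₁ L₂ b W} : Drop 0 m L₁ L₂ → Drop 0 (m + 1) (.pair L₁ b W) L₂
| skip {l m L₁ L₂ b W₁ W₂} : Drop l m L₁ L₂ → Lift l m W₂ W₁ →
    Drop (l + 1) m (.pair L₁ b W₁) (.pair L₂ b W₂)

inductive Cpx (h g : Nat → Nat) : Env → Tm → Tm → Prop
| sort {L k} : Cpx h g L (.sort k) (.sort k)
| lref {L i} : Cpx h g L (.lref i) (.lref i)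
| st {L k d} : g k = d + 1 → Cpx h g L (.sort k) (.sort (h k))
| bind {L b W₁ W₂ T₁ T₂} : Cpx h g L W₁ W₂ → Cpx h g (.pair L b W₁) T₁ T₂ →
    Cpx h g L (.bind b W₁ T₁) (.bind b W₂ T₂)
| flat {L f V₁ V₂ T₁ T₂} : Cpx h g L V₁ V₂ → Cpx h g L T₁ T₂ →
    Cpx h g L (.flat f V₁ T₁) (.flat f V₂ T₂)
| delta {L K b W₁ W₂ V₂ i} : Drop 0 i L (.pair K b W₁) → Cpx h g K W₁ W₂ →
    Lift 0 (i + 1) W₂ V₂ → Cpx h g L (.lref i) V₂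
| beta {L V₁ V₂ W₁ W₂ T₁ T₂} : Cpx h g L V₁ V₂ → Cpx h g L W₁ W₂ →
    Cpx h g (.pair L .abst W₁) T₁ T₂ →
    Cpx h g L (.flat .appl V₁ (.bind .abst W₁ T₁))
      (.bind .abbr (.flat .cast W₂ V₂) T₂)
| zeta {L V U₁ U₂ T₂} : Cpx h g (.pair L .abbr V) U₁ U₂ → Lift 0 1 T₂ U₂ →
    Cpx h g L (.bind .abbr V U₁) T₂
| eps {L U T₁ T₂} : Cpx h g L T₁ T₂ → Cpx h g L (.flat .cast U T₁) T₂
| ee {L U₁ U₂ T} : Cpx h g L U₁ U₂ → Cpx h g L (.flat .cast U₁ T) U₂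
| theta {L V₁ V₂ W₂ U₁ U₂ T₁ T₂} : Cpx h g L V₁ V₂ → Lift 0 1 V₂ W₂ →
    Cpx h g L U₁ U₂ → Cpx h g (.pair L .abbr U₁) T₁ T₂ →
    Cpx h g L (.flat .appl V₁ (.bind .abbr U₁ T₁))
      (.bind .abbr U₂ (.flat .appl W₂ T₂))

inductive Lpx (h g : Nat → Nat) : Env → Env → Prop
| atom : Lpx h g .null .null
| pair {L₁ L₂ b W₁ W₂} : Lpx h g L₁ L₂ → Cpx h g L₁ W₁ W₂ →
    Lpx h g (.pair L₁ b W₁) (.pair L₂ b W₂)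

def elen : Env → Nat
| .null => 0
| .pair L _ _ => elen L + 1

inductive Lleq : Nat → Tm → Env → Env → Prop
| sort {l k L₁ L₂} : elen L₁ = elen L₂ → Lleq l (.sort k) L₁ L₂
| skip {l i L₁ L₂} : elen L₁ = elen L₂ → i < l → Lleq l (.lref i) L₁ L₂
| free {l i L₁ L₂} : elen L₁ = elen L₂ → elen L₁ ≤ i → elen L₂ ≤ i →
    Lleq l (.lref i) L₁ L₂
| lref {l i L₁ L₂ K₁ K₂ b W} : l ≤ i →
    Drop 0 i L₁ (.pair K₁ b W) → Drop 0 i L₂ (.pair K₂ b W) →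
    Lleq 0 W K₁ K₂ → Lleq l (.lref i) L₁ L₂
| bind {l b W T L₁ L₂} : Lleq l W L₁ L₂ →
    Lleq (l + 1) T (.pair L₁ b W) (.pair L₂ b W) →
    Lleq l (.bind b W T) L₁ L₂
| flat {l f V T L₁ L₂} : Lleq l V L₁ L₂ → Lleq l T L₁ L₂ →
    Lleq l (.flat f V T) L₁ L₂


/-!
A position `j` of `L₁` matters for `Lleq l T L₁ L₂` exactly when it is hereditarily free in
`⦃L₁, T⦄` at level `l`, so `Lleq l T L₁ L₂` says that `L₁` and `L₂` have the same length and the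
same entries at those positions. The theorem then reduces to the observation that an extended
parallel step `T₁ ⟶ T₂` in `L` can only shrink the set of hereditarily free positions: every
redex replaces a subterm by pieces of it, of the environment, or of lifted copies of these.
-/

-- `bind` weighs `2` so that `esize L + tsize T` drops when a binder's entry is pushed onto `L`.
def tsize : Tm → ℕ
  | .sort _ => 1
  | .lref _ => 1
  | .bind _ W T => tsize W + tsize T + 2
  | .flat _ V T => tsize V + tsize T + 1

def esize : Env → ℕ
  | .null => 0
  | .pair L _ W => esize L + tsize W + 1

theorem Lift.tsize_eq {l m : ℕ} {T₁ T₂ : Tm} (h : Lift l m T₁ T₂) : tsize T₁ = tsize T₂ := by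
  induction h <;> simp only [tsize] <;> omega

namespace Drop

theorem refl : ∀ L, Drop 0 0 L L
  | .null => .atom 0
  | .pair L _ _ => .pair (refl L)

theorem eq_of_zero : ∀ {L X : Env}, Drop 0 0 L X → X = L
  | .null, _, .atom _ => rfl
  | .pair _ _ _, _, .pair h => by rw [eq_of_zero h]

theorem succ_pair_iff {n : ℕ} {L X : Env} {b : Bk} {W : Tm} :
    Drop 0 (n + 1) (.pair L b W) X ↔ Drop 0 n L X :=
  ⟨fun | .drop h => h, .drop⟩

theorem elen_eq {l m : ℕ} {L K : Env} (h : Drop l m L K) : elen L = elen K + m := by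
  induction h <;> simp only [elen] at * <;> omega

theorem esize_le {l m : ℕ} {L K : Env} (h : Drop l m L K) : esize K ≤ esize L := by
  induction h with
  | atom => exact le_rfl
  | pair _ ih | drop _ ih => simp only [esize]; omega
  | skip _ hl ih => simp only [esize, hl.tsize_eq]; omega

theorem add_iff {l m i : ℕ} {L K X : Env} (h : Drop l m L K) (hi : l ≤ i) :
    Drop 0 (m + i) L X ↔ Drop 0 i K X := by
  induction h generalizing i with
  | atom => rw [Nat.zero_add]
  | pair h => rw [Nat.zero_add, eq_of_zero h]
  | drop _ ih => rw [Nat.add_right_comm, succ_pair_iff, ih hi]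
  | skip _ _ ih =>
    obtain ⟨i, rfl⟩ : ∃ i', i = i' + 1 := ⟨i - 1, by omega⟩
    rw [← Nat.add_assoc, succ_pair_iff, succ_pair_iff, ih (by omega)]

theorem unique {m : ℕ} {L X Y : Env} (hX : Drop 0 m L X) (hY : Drop 0 m L Y) : X = Y :=
  (eq_of_zero ((hX.add_iff le_rfl).1 hY)).symm

theorem succ_of_pair {i : ℕ} {L K : Env} {b : Bk} {W : Tm} (h : Drop 0 i L (.pair K b W)) :
    Drop 0 (i + 1) L K :=
  (h.add_iff (Nat.zero_le 1)).2 (.drop (refl K))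

end Drop

/-- `HFree l L T j`: the position `j` of `L` (counted from the top, like a de Bruijn index) is
hereditarily free at level `l` in `⦃L, T⦄`. -/
inductive HFree : ℕ → Env → Tm → ℕ → Prop
  | lref {l L i} : l ≤ i → HFree l L (.lref i) i
  | delta {l L i K b W j} : l ≤ i → Drop 0 i L (.pair K b W) → HFree 0 K W j →
      HFree l L (.lref i) (i + 1 + j)
  | bindW {l L b W T j} : HFree l L W j → HFree l L (.bind b W T) j
  | bindT {l L b W T j} : HFree (l + 1) (.pair L b W) T (j + 1) → HFree l L (.bind b W T) j
  | flatV {l L f V T j} : HFree l L V j → HFree l L (.flat f V T) j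
  | flatT {l L f V T j} : HFree l L T j → HFree l L (.flat f V T) j

namespace HFree

variable {l j : ℕ} {L : Env} {T : Tm}

theorem le (h : HFree l L T j) : l ≤ j := by
  induction h <;> omega

theorem mono {l' : ℕ} (h : HFree l L T j) (hl : l' ≤ l) : HFree l' L T j := by
  induction h generalizing l' with
  | lref h => exact .lref (hl.trans h)
  | delta h hd hf => exact .delta (hl.trans h) hd hf
  | bindW _ ih => exact .bindW (ih hl)
  | bindT _ ih => exact .bindT (ih (Nat.succ_le_succ hl))
  | flatV _ ih => exact .flatV (ih hl)
  | flatT _ ih => exact .flatT (ih hl)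

theorem lift {m : ℕ} {K : Env} {W V : Tm} (h : HFree l K W j) (hd : Drop l m L K)
    (hl : Lift l m W V) : HFree l L V (j + m) := by
  induction h generalizing m L V with
  | lref hli =>
    cases hl with
    | lt h => omega
    | ge h => exact .lref (by omega)
  | @delta l K i Q c U j₀ hli hdr hf0 =>
    cases hl with
    | lt h => omega
    | ge h =>
      have hdr' : Drop 0 (i + m) L (.pair Q c U) := by
        rw [Nat.add_comm]; exact (hd.add_iff hli).2 hdr
      rw [show i + 1 + j₀ + m = i + m + 1 + j₀ by omega]
      exact .delta (by omega) hdr' hf0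
  | bindW _ ih => cases hl with | bind hlW _ => exact .bindW (ih hd hlW)
  | bindT _ ih =>
    cases hl with
    | bind hlW hlT =>
      have h := ih (.skip hd hlW) hlT
      rw [Nat.add_right_comm] at h
      exact .bindT h
  | flatV _ ih => cases hl with | flat hlV _ => exact .flatV (ih hd hlV)
  | flatT _ ih => cases hl with | flat _ hlT => exact .flatT (ih hd hlT)

theorem inv_lift {m : ℕ} {K : Env} {W V : Tm} (h : HFree l L V j) (hd : Drop l m L K)
    (hl : Lift l m W V) : ∃ j₀, j = j₀ + m ∧ HFree l K W j₀ := by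
  induction h generalizing m K W with
  | lref hli =>
    cases hl with
    | lt h => omega
    | ge h => exact ⟨_, rfl, .lref h⟩
  | @delta l L i Q c U j₀ hli hdr hf0 =>
    cases hl with
    | lt h => omega
    | @ge _ _ i₀ h =>
      have hdr' : Drop 0 i₀ K (.pair Q c U) := by
        rw [Nat.add_comm] at hdr; exact (hd.add_iff h).1 hdr
      exact ⟨i₀ + 1 + j₀, by omega, .delta h hdr' hf0⟩
  | bindW _ ih =>
    cases hl with
    | bind hlW _ =>
      obtain ⟨j₀, rfl, h⟩ := ih hd hlW
      exact ⟨j₀, rfl, .bindW h⟩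
  | bindT _ ih =>
    cases hl with
    | bind hlW hlT =>
      obtain ⟨j₀, hj, h⟩ := ih (.skip hd hlW) hlT
      obtain ⟨j₁, rfl⟩ : ∃ j₁, j₀ = j₁ + 1 := ⟨j₀ - 1, by have := h.le; omega⟩
      exact ⟨j₁, by omega, .bindT h⟩
  | flatV _ ih =>
    cases hl with
    | flat hlV _ =>
      obtain ⟨j₀, rfl, h⟩ := ih hd hlV
      exact ⟨j₀, rfl, .flatV h⟩
  | flatT _ ih =>
    cases hl with
    | flat _ hlT =>
      obtain ⟨j₀, rfl, h⟩ := ih hd hlT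
      exact ⟨j₀, rfl, .flatT h⟩

theorem succ_level_or_entry (h : HFree l L T j) (hlt : l < j) :
    HFree (l + 1) L T j ∨
      ∃ K c U j₀, Drop 0 l L (.pair K c U) ∧ j = l + 1 + j₀ ∧ HFree 0 K U j₀ := by
  induction h with
  | lref h => exact .inl (.lref (by omega))
  | @delta l L i K b W j₀ h hd hf0 =>
    obtain rfl | hli := eq_or_ne l i
    · exact .inr ⟨K, b, W, j₀, hd, rfl, hf0⟩
    · exact .inl (.delta (by omega) hd hf0)
  | bindW _ ih => exact (ih hlt).imp .bindW id
  | bindT _ ih =>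
    refine (ih (by omega)).imp .bindT ?_
    rintro ⟨K, c, U, j₀, hd, hj, hf0⟩
    exact ⟨K, c, U, j₀, Drop.succ_pair_iff.1 hd, by omega, hf0⟩
  | flatV _ ih => exact (ih hlt).imp .flatV id
  | flatT _ ih => exact (ih hlt).imp .flatT id

theorem bind_of_succ {b : Bk} {W : Tm} (h : HFree 0 (.pair L b W) T (j + 1)) :
    HFree 0 L (.bind b W T) j := by
  rcases h.succ_level_or_entry (Nat.succ_pos j) with h | ⟨K, c, U, j₀, hd, hj, hf0⟩
  · exact .bindT h
  · cases Drop.eq_of_zero hd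
    obtain rfl : j = j₀ := by omega
    exact .bindW hf0

end HFree

/-- Every position hereditarily free through the entry `i` of `L₂` is hereditarily free through
the entry `i` of `L₁`, or belongs to `S`. -/
def EnvSub (S : Set ℕ) (L₁ L₂ : Env) : Prop :=
  ∀ i K₂ c₂ U₂, Drop 0 i L₂ (.pair K₂ c₂ U₂) → ∃ K₁ c₁ U₁, Drop 0 i L₁ (.pair K₁ c₁ U₁) ∧
    ∀ j, HFree 0 K₂ U₂ j → HFree 0 K₁ U₁ j ∨ i + 1 + j ∈ S

namespace EnvSub

theorem refl (S : Set ℕ) (L : Env) : EnvSub S L L :=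
  fun _ K c U hd => ⟨K, c, U, hd, fun _ h => .inl h⟩

theorem cons {S : Set ℕ} {L₁ L₂ : Env} {b₁ b₂ : Bk} {W₁ W₂ : Tm} (hL : EnvSub S L₁ L₂)
    (hW : ∀ j, HFree 0 L₂ W₂ j → HFree 0 L₁ W₁ j ∨ j ∈ S) :
    EnvSub ((· + 1) '' S) (.pair L₁ b₁ W₁) (.pair L₂ b₂ W₂) := by
  rintro (_ | i) K₂ c₂ U₂ hd
  · cases Drop.eq_of_zero hd
    exact ⟨L₁, b₁, W₁, Drop.refl _,
      fun j h => (hW j h).imp id fun hj => ⟨j, hj, by dsimp only; omega⟩⟩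
  · obtain ⟨K₁, c₁, U₁, hd₁, hU⟩ := hL i K₂ c₂ U₂ (Drop.succ_pair_iff.1 hd)
    exact ⟨K₁, c₁, U₁, .drop hd₁,
      fun j h => (hU j h).imp id fun hj => ⟨i + 1 + j, hj, by dsimp only; omega⟩⟩

end EnvSub

theorem HFree.of_envSub {T : Tm} {l j : ℕ} {S : Set ℕ} {L₁ L₂ : Env} (hS : EnvSub S L₁ L₂)
    (h : HFree l L₂ T j) : HFree l L₁ T j ∨ j ∈ S := by
  induction T generalizing l j S L₁ L₂ with
  | sort => cases h
  | lref =>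
    cases h with
    | lref h => exact .inl (.lref h)
    | delta h hd hf0 =>
      obtain ⟨K₁, c₁, U₁, hd₁, hU⟩ := hS _ _ _ _ hd
      exact (hU _ hf0).imp (.delta h hd₁) id
  | bind b W T ihW ihT =>
    cases h with
    | bindW h => exact (ihW hS h).imp .bindW id
    | bindT h =>
      refine (ihT (hS.cons fun j h => ihW hS h) h).imp .bindT ?_
      rintro ⟨j', hj', hj⟩
      rwa [Nat.succ_injective hj] at hj'
  | flat f V T ihV ihT =>
    cases h with
    | flatV h => exact (ihV hS h).imp .flatV id
    | flatT h => exact (ihT hS h).imp .flatT id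

theorem HFree.of_entry {l j : ℕ} {L : Env} {b₁ b₂ : Bk} {W₁ W₂ T : Tm}
    (hW : ∀ j, HFree 0 L W₂ j → HFree 0 L W₁ j) (h : HFree l (.pair L b₂ W₂) T j) :
    HFree l (.pair L b₁ W₁) T j :=
  (h.of_envSub ((EnvSub.refl ∅ L).cons fun j hj => .inl (hW j hj))).resolve_right
    (by simp)

theorem Cpx.hfree {h g : ℕ → ℕ} {L : Env} {T₁ T₂ : Tm} (hc : Cpx h g L T₁ T₂) {j : ℕ}
    (hf : HFree 0 L T₂ j) : HFree 0 L T₁ j := by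
  induction hc generalizing j with
  | sort | lref => exact hf
  | st => cases hf
  | bind _ _ ihW ihT =>
    cases hf with
    | bindW hf => exact .bindW (ihW hf)
    | bindT hf => exact (ihT ((hf.of_entry @ihW).mono (Nat.zero_le 1))).bind_of_succ
  | flat _ _ ihV ihT =>
    cases hf with
    | flatV hf => exact .flatV (ihV hf)
    | flatT hf => exact .flatT (ihT hf)
  | delta hdr _ hl ihW =>
    obtain ⟨j₀, rfl, hW⟩ := hf.inv_lift hdr.succ_of_pair hl
    rw [Nat.add_comm]
    exact .delta (Nat.zero_le _) hdr (ihW hW)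
  | @beta L V₁ V₂ W₁ W₂ T₁ T₂ _ _ _ ihV ihW ihT =>
    cases hf with
    | bindW hf =>
      cases hf with
      | flatV hf => exact .flatT (.bindW (ihW hf))
      | flatT hf => exact .flatV (ihV hf)
    | bindT hf =>
      -- the new entry `cast W₂ V₂` reaches only positions reached by `W₁` or by the argument `V₁`
      have hS : EnvSub ((· + 1) '' {j | HFree 0 L V₁ j})
          (.pair L .abst W₁) (.pair L .abbr (.flat .cast W₂ V₂)) :=
        (EnvSub.refl _ L).cons fun j hj => by
          cases hj with
          | flatV hj => exact .inl (ihW hj)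
          | flatT hj => exact .inr (ihV hj)
      rcases hf.of_envSub hS with hf | ⟨j', hj', hj⟩
      · exact .flatT (ihT (hf.mono (Nat.zero_le 1))).bind_of_succ
      · rw [Nat.succ_injective hj] at hj'
        exact .flatV hj'
  | zeta _ hl ihU => exact (ihU (hf.lift (.drop (Drop.refl _)) hl)).bind_of_succ
  | eps _ ih => exact .flatT (ih hf)
  | ee _ ih => exact .flatV (ih hf)
  | theta _ hl _ _ ihV ihU ihT =>
    cases hf with
    | bindW hf => exact .flatT (.bindW (ihU hf))
    | bindT hf =>
      cases (hf.of_entry @ihU).mono (Nat.zero_le 1) with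
      | flatV hf =>
        obtain ⟨j₀, hj, hf⟩ := hf.inv_lift (.drop (Drop.refl _)) hl
        rw [Nat.succ_injective hj]
        exact .flatV (ihV hf)
      | flatT hf => exact .flatT (ihT hf).bind_of_succ

def SameEntry (L₁ L₂ : Env) (j : ℕ) : Prop :=
  ∃ K₁ K₂ b W, Drop 0 j L₁ (.pair K₁ b W) ∧ Drop 0 j L₂ (.pair K₂ b W)

theorem sameEntry_add_iff {m j : ℕ} {L₁ L₂ K₁ K₂ : Env} (h₁ : Drop 0 m L₁ K₁)
    (h₂ : Drop 0 m L₂ K₂) : SameEntry L₁ L₂ (m + j) ↔ SameEntry K₁ K₂ j := by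
  simp only [SameEntry, h₁.add_iff (Nat.zero_le j), h₂.add_iff (Nat.zero_le j)]

theorem Lleq.elen_eq {l : ℕ} {T : Tm} {L₁ L₂ : Env} (h : Lleq l T L₁ L₂) :
    elen L₁ = elen L₂ := by
  induction h with
  | sort h | skip h _ | free h _ _ => exact h
  | lref _ h₁ h₂ _ _ =>
    have e₁ := h₁.elen_eq
    have e₂ := h₂.elen_eq
    simp only [elen] at e₁ e₂
    omega
  | bind _ _ ih _ | flat _ _ ih _ => exact ih

theorem Lleq.sameEntry {l j : ℕ} {T : Tm} {L₁ L₂ : Env} (hq : Lleq l T L₁ L₂)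
    (hf : HFree l L₁ T j) (hj : j < elen L₁) : SameEntry L₁ L₂ j := by
  induction hq generalizing j with
  | sort _ => cases hf
  | skip _ hlt => cases hf <;> omega
  | free _ hge _ =>
    cases hf with
    | lref => omega
    | delta _ hd _ =>
      have := hd.elen_eq
      simp only [elen] at this
      omega
  | lref _ h₁ h₂ _ ih =>
    cases hf with
    | lref _ => exact ⟨_, _, _, _, h₁, h₂⟩
    | delta _ hd hf =>
      cases h₁.unique hd
      have := h₁.elen_eq
      simp only [elen] at this
      exact (sameEntry_add_iff h₁.succ_of_pair h₂.succ_of_pair).2 (ih hf (by omega))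
  | bind _ _ ihW ihT =>
    cases hf with
    | bindW hf => exact ihW hf hj
    | bindT hf =>
      obtain ⟨K₁, K₂, c, U, hd₁, hd₂⟩ := ihT hf (by simp only [elen]; omega)
      exact ⟨K₁, K₂, c, U, Drop.succ_pair_iff.1 hd₁, Drop.succ_pair_iff.1 hd₂⟩
  | flat _ _ ihV ihT =>
    cases hf with
    | flatV hf => exact ihV hf hj
    | flatT hf => exact ihT hf hj

theorem lleq_of_sameEntry {l : ℕ} {T : Tm} {L₁ L₂ : Env} (hlen : elen L₁ = elen L₂)
    (hT : ∀ j, HFree l L₁ T j → j < elen L₁ → SameEntry L₁ L₂ j) : Lleq l T L₁ L₂ := by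
  induction hn : esize L₁ + tsize T using Nat.strong_induction_on generalizing l T L₁ L₂ with
  | _ n ih =>
  subst hn
  cases T with
  | sort => exact .sort hlen
  | lref i =>
    by_cases hil : i < l
    · exact .skip hlen hil
    by_cases hi : elen L₁ ≤ i
    · exact .free hlen hi (hlen ▸ hi)
    obtain ⟨K₁, K₂, b, W, hd₁, hd₂⟩ := hT i (.lref (by omega)) (by omega)
    have e₁ := hd₁.elen_eq
    have e₂ := hd₂.elen_eq
    have hsize := hd₁.esize_le
    simp only [elen, esize] at e₁ e₂ hsize
    refine .lref (by omega) hd₁ hd₂ (ih _ (by simp only [tsize]; omega) (by omega)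
      (fun j hf hj => ?_) rfl)
    exact (sameEntry_add_iff hd₁.succ_of_pair hd₂.succ_of_pair).1
      (hT _ (.delta (by omega) hd₁ hf) (by omega))
  | bind b W T =>
    refine .bind (ih _ (by simp only [tsize]; omega) hlen (fun j hf => hT j hf.bindW) rfl)
      (ih _ (by simp only [esize, tsize]; omega) (by simp only [elen, hlen])
        (fun j hf hj => ?_) rfl)
    obtain ⟨j, rfl⟩ : ∃ j', j = j' + 1 := ⟨j - 1, by have := hf.le; omega⟩
    obtain ⟨K₁, K₂, c, U, hd₁, hd₂⟩ := hT j hf.bindT (by simp only [elen] at hj; omega)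
    exact ⟨K₁, K₂, c, U, .drop hd₁, .drop hd₂⟩
  | flat f V T =>
    exact .flat (ih _ (by simp only [tsize]; omega) hlen (fun j hf => hT j hf.flatV) rfl)
      (ih _ (by simp only [tsize]; omega) hlen (fun j hf => hT j hf.flatT) rfl)

theorem lleq_iff {l : ℕ} {T : Tm} {L₁ L₂ : Env} :
    Lleq l T L₁ L₂ ↔
      elen L₁ = elen L₂ ∧ ∀ j, HFree l L₁ T j → j < elen L₁ → SameEntry L₁ L₂ j :=
  ⟨fun hq => ⟨hq.elen_eq, fun _ => hq.sameEntry⟩, fun ⟨hlen, hT⟩ => lleq_of_sameEntry hlen hT⟩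

theorem cpx_lleq_conf_sn {h g : Nat → Nat} {L₁ L₂ : Env} {T₁ T₂ : Tm}
    (hc : Cpx h g L₁ T₁ T₂) (hq : Lleq 0 T₁ L₁ L₂) : Lleq 0 T₂ L₁ L₂ := by
  rw [lleq_iff] at hq ⊢
  exact ⟨hq.1, fun j hf => hq.2 j (hc.hfree hf)⟩
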